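/- For every real A there exists a nonempty Π⁰₁(A) class C ⊆ 2^ω (a class of the form [T] for a tree T ⊆ 2^{<ω} computable in A) such that every f ∈ C satisfies f ∈ PA(A) and A ≤_tt f; indeed there is a single infinite computable set M such that every f ∈ C codes A on the positions in M, i.e., Restr(f, M) = A. -/

import Mathlib

/-- `A` is truth-table reducible to `B`: there is a computable bound `f` and a total
computable evaluator `g` such that `A n` is determined by `B ↾ f n` via `g`. -/
def TTReducible (A B : ℕ → Bool) : Prop :=
  ∃ f : ℕ → ℕ, Computable f ∧ ∃ g : ℕ → List Bool → Bool, Computable₂ g ∧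
    ∀ n, A n = g n ((List.range (f n)).map B)

/-- Truth-table equivalence. -/
def TTEquiv (A B : ℕ → Bool) : Prop := TTReducible A B ∧ TTReducible B A

/-- The effective join `A ⊕ B`. -/
def ttJoin (A B : ℕ → Bool) : ℕ → Bool :=
  fun n => if n % 2 = 0 then A (n / 2) else B (n / 2)

/-- Codes for oracle (relative) partial recursive functions. -/
inductive OCode : Type
  | zero | succ | left | right | oracle
  | pair : OCode → OCode → OCode
  | comp : OCode → OCode → OCode
  | prec : OCode → OCode → OCode
  | rfind' : OCode → OCode

/-- Evaluation of an oracle code relative to an oracle `O : ℕ → Bool`. -/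
def OCode.eval (O : ℕ → Bool) : OCode → ℕ →. ℕ
  | .zero => pure 0
  | .succ => fun n => Part.some (n + 1)
  | .left => fun n : ℕ => Part.some n.unpair.1
  | .right => fun n : ℕ => Part.some n.unpair.2
  | .oracle => fun n => Part.some (cond (O n) 1 0)
  | .pair cf cg => fun n => Nat.pair <$> OCode.eval O cf n <*> OCode.eval O cg n
  | .comp cf cg => fun n => OCode.eval O cg n >>= OCode.eval O cf
  | .prec cf cg =>
    Nat.unpaired fun a n =>
      n.rec (OCode.eval O cf a) fun y IH => do
        let i ← IH
        OCode.eval O cg (Nat.pair a (Nat.pair y i))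
  | .rfind' cf =>
    Nat.unpaired fun a m =>
      (Nat.rfind fun n => (fun m => m = 0) <$> OCode.eval O cf (Nat.pair a (n + m))).map (· + m)

/-- A standard enumeration of the oracle codes. -/
def OCode.ofNat : ℕ → OCode
  | 0 => .zero
  | 1 => .succ
  | 2 => .left
  | 3 => .right
  | 4 => .oracle
  | n + 5 =>
    let m := n.div2.div2
    have hm : m < n + 5 := by
      simp only [m, Nat.div2_val]
      exact lt_of_le_of_lt (le_trans (Nat.div_le_self _ _) (Nat.div_le_self _ _))
        (by omega)
    have _m1 : m.unpair.1 < n + 5 := lt_of_le_of_lt m.unpair_left_le hm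
    have _m2 : m.unpair.2 < n + 5 := lt_of_le_of_lt m.unpair_right_le hm
    match n.bodd, n.div2.bodd with
    | false, false => .pair (OCode.ofNat m.unpair.1) (OCode.ofNat m.unpair.2)
    | false, true  => .comp (OCode.ofNat m.unpair.1) (OCode.ofNat m.unpair.2)
    | true , false => .prec (OCode.ofNat m.unpair.1) (OCode.ofNat m.unpair.2)
    | true , true  => .rfind' (OCode.ofNat m)
decreasing_by
  all_goals
    have h1 : (Nat.unpair n.div2.div2).1 < n + 5 := _m1
    have h2 : (Nat.unpair n.div2.div2).2 < n + 5 := _m2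
    have h3 : n.div2.div2 < n + 5 := hm
    simp only [Nat.succ_eq_add_one] at *
    omega

open Classical in
/-- The Turing jump `X′` of a real `X` : the halting problem relative to `X`. -/
noncomputable def ttJump (X : ℕ → Bool) : ℕ → Bool :=
  fun e => if ((OCode.ofNat e).eval X e).Dom then true else false

/-- The `n`-th iterated jump. -/
noncomputable def ttJumpIter : ℕ → (ℕ → Bool) → (ℕ → Bool)
  | 0, X => X
  | n + 1, X => ttJump (ttJumpIter n X)

/-- The initial segment `X ↾ l` of a real, as a finite binary string. -/
def strPrefix (X : ℕ → Bool) (l : ℕ) : List Bool := (List.range l).map X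

/-- `S` is a `Σ₂` set of strings. -/
def IsSigma2 (S : Set (List Bool)) : Prop :=
  ∃ R : List Bool → ℕ → ℕ → Bool,
    Computable (fun p : List Bool × ℕ × ℕ => R p.1 p.2.1 p.2.2) ∧
    ∀ σ, σ ∈ S ↔ ∃ a, ∀ b, R σ a b = true

/-- `X` is 2-generic: for every `Σ₂` set `S` of strings, either some initial segment of `X`
is in `S`, or past some initial segment no extension is in `S`. -/
def TwoGeneric (X : ℕ → Bool) : Prop :=
  ∀ S : Set (List Bool), IsSigma2 S →
    (∃ l, strPrefix X l ∈ S) ∨ (∃ l, ∀ τ : List Bool, strPrefix X l <+: τ → τ ∉ S)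

/-- `PA(A)`: the class of binary-valued functions diagonally noncomputable relative to `A`,
i.e. `f x` differs from `{x}^A(x)` for every `x`. -/
def PArel (A : ℕ → Bool) : Set (ℕ → Bool) :=
  {f | ∀ x : ℕ, ¬ ((cond (f x) 1 0 : ℕ) ∈ (OCode.ofNat x).eval A x)}

/-- A set of strings is a tree if it is closed under prefixes. -/
def IsStringTree (T : Set (List Bool)) : Prop :=
  ∀ σ τ : List Bool, σ ∈ T → τ <+: σ → τ ∈ T

open Classical in
/-- A set of strings is computable in `A` if some oracle code decides membership in it
relative to `A`. -/
noncomputable def TreeComputableIn (A : ℕ → Bool) (T : Set (List Bool)) : Prop :=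
  ∃ c : OCode, ∀ σ : List Bool,
    c.eval A (Encodable.encode σ) = Part.some (if σ ∈ T then 1 else 0)

/-- The set of infinite paths through a tree of strings. -/
def treePaths (T : Set (List Bool)) : Set (ℕ → Bool) :=
  {f | ∀ n : ℕ, strPrefix f n ∈ T}

/-!
The tree consists of the strings `σ` that carry `A k` at position `divergentIndex k`, the index
of an oracle program diverging on every input, and that at each `x < |σ|` avoid every value of
`{x}^{A ↾ l}(x)` found within `|σ|` steps with an oracle prefix of length `l ≤ |σ|`. Both
conditions are decidable from `σ` and `A ↾ |σ|`, so the tree is computable in `A`. They never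
conflict, since the coded positions are divergent programs; hence the diagonal function with `A`
planted on `M = range divergentIndex` is a path. Conversely, a convergent computation
`{x}^A(x)` queries finitely much of `A` and halts in finitely many steps, so every path is in
`PA(A)`, and every path reads off `A` on `M`.
-/

open Filter Encodable
open Nat.Partrec (Code)

theorem Nat.nth_mem_range_eq_of_strictMono {f : ℕ → ℕ} (hf : StrictMono f) :
    Nat.nth (· ∈ Set.range f) = f := by
  have hinf : (Set.range f).Infinite := Set.infinite_range_of_injective hf.injective
  refine (StrictMono.range_inj (Nat.nth_strictMono hinf) hf).1 ?_
  exact Nat.range_nth_of_infinite hinf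

theorem PrimrecPred.mem_range_of_strictMono {f : ℕ → ℕ} (hf : Primrec f) (hmono : StrictMono f) :
    PrimrecPred (· ∈ Set.range f) := by
  refine ((PrimrecRel.exists_lt (R := fun k x => f k = x)
    (Primrec.eq.comp (hf.comp Primrec.fst) Primrec.snd)).comp
    Primrec.succ Primrec.id).of_eq fun x => ?_
  exact ⟨fun ⟨k, _, hk⟩ => ⟨k, hk⟩, fun ⟨k, hk⟩ => ⟨k, Nat.lt_succ_of_le (hk ▸ hmono.id_le k), hk⟩⟩

theorem PrimrecRel.forall_lt_of_primrec {α : Type*} [Primcodable α] {p : α → ℕ → Prop}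
    (hp : PrimrecRel p) {f : α → ℕ} (hf : Primrec f) : PrimrecPred fun a => ∀ x < f a, p a x :=
  (hp.swap.forall_mem_list.comp (Primrec.list_range.comp hf) Primrec.id).of_eq fun a => by simp

theorem PrimrecPred.imp {α : Type*} [Primcodable α] {p q : α → Prop} (hp : PrimrecPred p)
    (hq : PrimrecPred q) : PrimrecPred fun a => p a → q a :=
  (hp.not.or hq).of_eq fun _ => imp_iff_not_or.symm

theorem strPrefix_length (X : ℕ → Bool) (n : ℕ) : (strPrefix X n).length = n := by
  simp [strPrefix]

theorem strPrefix_getD {X : ℕ → Bool} {n x : ℕ} (h : x < n) :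
    (strPrefix X n).getD x false = X x := by
  simp [strPrefix, h]

theorem strPrefix_take {X : ℕ → Bool} {n l : ℕ} (h : l ≤ n) :
    (strPrefix X n).take l = strPrefix X l := by
  simp [strPrefix, ← List.map_take, List.take_range, Nat.min_eq_left h]

theorem ttReducible_of_apply_eq {A f : ℕ → Bool} {d : ℕ → ℕ} (hd : Primrec d)
    (h : ∀ k, f (d k) = A k) : TTReducible A f := by
  refine ⟨fun k => d k + 1, (Primrec.succ.comp hd).to_comp, fun k σ => σ.getD (d k) false,
    ((Primrec.list_getD false).comp Primrec.snd (hd.comp Primrec.fst)).to_comp, fun k => ?_⟩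
  rw [← h]
  exact (strPrefix_getD (Nat.lt_succ_self _)).symm

namespace OCode

def evalWith (φ : ℕ →. ℕ) : OCode → ℕ →. ℕ
  | .zero => pure 0
  | .succ => fun n => Part.some (n + 1)
  | .left => fun n : ℕ => Part.some n.unpair.1
  | .right => fun n : ℕ => Part.some n.unpair.2
  | .oracle => φ
  | .pair cf cg => fun n => Nat.pair <$> evalWith φ cf n <*> evalWith φ cg n
  | .comp cf cg => fun n => evalWith φ cg n >>= evalWith φ cf
  | .prec cf cg =>
    Nat.unpaired fun a n =>
      n.rec (evalWith φ cf a) fun y IH => do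
        let i ← IH
        evalWith φ cg (Nat.pair a (Nat.pair y i))
  | .rfind' cf =>
    Nat.unpaired fun a m =>
      (Nat.rfind fun n => (fun m => m = 0) <$> evalWith φ cf (Nat.pair a (n + m))).map (· + m)

theorem eval_eq_evalWith (O : ℕ → Bool) (c : OCode) :
    c.eval O = evalWith (fun n => Part.some (cond (O n) 1 0)) c := by
  induction c <;> simp only [OCode.eval, evalWith, *] <;> rfl

/-- The use principle: a convergent computation makes only finitely many oracle queries. -/
theorem eventually_mem_evalWith {ι : Type*} {l : Filter ι} {φ : ℕ →. ℕ} {ψ : ι → ℕ →. ℕ}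
    (hφ : ∀ n a, a ∈ φ n → ∀ᶠ i in l, a ∈ ψ i n) :
    ∀ (c : OCode) {n a : ℕ}, a ∈ evalWith φ c n → ∀ᶠ i in l, a ∈ evalWith (ψ i) c n
  | .zero, _, _, h | .succ, _, _, h | .left, _, _, h | .right, _, _, h => .of_forall fun _ => h
  | .oracle, _, _, h => hφ _ _ h
  | .pair cf cg, n, a, h => by
    simp only [evalWith, Seq.seq, Part.map_eq_map, Part.mem_bind_iff, Part.mem_map_iff] at h ⊢
    obtain ⟨_, ⟨x, hx, rfl⟩, y, hy, rfl⟩ := h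
    filter_upwards [eventually_mem_evalWith hφ cf hx, eventually_mem_evalWith hφ cg hy]
      with i hx hy
    exact ⟨_, ⟨x, hx, rfl⟩, y, hy, rfl⟩
  | .comp cf cg, n, a, h => by
    obtain ⟨x, hx, ha⟩ := Part.mem_bind_iff.1 h
    filter_upwards [eventually_mem_evalWith hφ cg hx, eventually_mem_evalWith hφ cf ha]
      with i hx ha
    exact Part.mem_bind_iff.2 ⟨x, hx, ha⟩
  | .prec cf cg, n, a, h => by
    simp only [evalWith, Nat.unpaired] at h ⊢
    generalize n.unpair.2 = m at h ⊢
    induction m generalizing a with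
    | zero => exact eventually_mem_evalWith hφ cf h
    | succ m ih =>
      obtain ⟨x, hx, ha⟩ := Part.mem_bind_iff.1 h
      filter_upwards [ih _ hx, eventually_mem_evalWith hφ cg ha] with i hx ha
      exact Part.mem_bind_iff.2 ⟨x, hx, ha⟩
  | .rfind' cf, n, a, h => by
    simp only [evalWith, Nat.unpaired, Part.mem_map_iff] at h ⊢
    obtain ⟨y, hy, rfl⟩ := h
    obtain ⟨hy, hlt⟩ := Nat.mem_rfind.1 hy
    have hstep : ∀ j b,
        b ∈ (fun m => decide (m = 0)) <$> evalWith φ cf (Nat.pair n.unpair.1 (j + n.unpair.2)) →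
        ∀ᶠ i in l, b ∈ (fun m => decide (m = 0)) <$>
          evalWith (ψ i) cf (Nat.pair n.unpair.1 (j + n.unpair.2)) := by
      intro j b hb
      obtain ⟨v, hv, rfl⟩ := Part.mem_map_iff _ |>.1 hb
      exact (eventually_mem_evalWith hφ cf hv).mono fun i hv => Part.mem_map _ hv
    filter_upwards [hstep y _ hy, (eventually_all_finset (Finset.range y)).2
      fun j hj => hstep j _ (hlt (Finset.mem_range.1 hj))] with i hy hlt
    exact ⟨y, Nat.mem_rfind.2 ⟨hy, fun hj => hlt _ (Finset.mem_range.2 hj)⟩, rfl⟩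

theorem evalWith_mono {φ ψ : ℕ →. ℕ} (H : ∀ n a, a ∈ φ n → a ∈ ψ n) (c : OCode) {n a : ℕ}
    (h : a ∈ evalWith φ c n) : a ∈ evalWith ψ c n :=
  eventually_pure.1 <| eventually_mem_evalWith (l := pure ()) (ψ := fun _ => ψ)
    (fun n a ha => eventually_pure.2 (H n a ha)) c h

def toCode (o : Code) : OCode → Code
  | .zero => .zero
  | .succ => .succ
  | .left => .left
  | .right => .right
  | .oracle => o
  | .pair cf cg => .pair (toCode o cf) (toCode o cg)
  | .comp cf cg => .comp (toCode o cf) (toCode o cg)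
  | .prec cf cg => .prec (toCode o cf) (toCode o cg)
  | .rfind' cf => .rfind' (toCode o cf)

theorem eval_toCode (o : Code) (c : OCode) : (toCode o c).eval = evalWith o.eval c := by
  induction c <;> simp only [toCode, Code.eval, evalWith, *] <;> rfl

def binaryCode (r : ℕ) (a b : Code) : Code :=
  if r = 0 then a.pair b else if r = 1 then a.prec b else a.comp b

def toCodeStep (o : Code) (IH : List Code) : Option Code :=
  if IH.length < 5 then [.zero, .succ, .left, .right, o][IH.length]?
  else if (IH.length - 5) % 4 = 3 then IH[(IH.length - 5) / 4]?.map Code.rfind'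
  else IH[((IH.length - 5) / 4).unpair.1]?.bind fun a =>
    IH[((IH.length - 5) / 4).unpair.2]?.map (binaryCode ((IH.length - 5) % 4) a)

theorem ofNat_add_five (n : ℕ) : OCode.ofNat (n + 5) =
    if n % 4 = 0 then .pair (.ofNat (n / 4).unpair.1) (.ofNat (n / 4).unpair.2)
    else if n % 4 = 1 then .prec (.ofNat (n / 4).unpair.1) (.ofNat (n / 4).unpair.2)
    else if n % 4 = 2 then .comp (.ofNat (n / 4).unpair.1) (.ofNat (n / 4).unpair.2)
    else .rfind' (.ofNat (n / 4)) := by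
  have hb : n.bodd = decide (n % 4 % 2 = 1) := by
    rw [Nat.mod_mod_of_dvd _ (by norm_num : 2 ∣ 4)]
    cases h : n.bodd <;> simp [Nat.mod_two_of_bodd, h]
  have hb2 : n.div2.bodd = decide (n % 4 / 2 = 1) := by
    have : n % 4 / 2 = n / 2 % 2 := by omega
    rw [this, ← Nat.div2_val]
    cases h : n.div2.bodd <;> simp [Nat.mod_two_of_bodd, h]
  have hq : n.div2.div2 = n / 4 := by simp only [Nat.div2_val]; omega
  rw [OCode.ofNat.eq_def]
  simp only [hb, hb2, hq]
  have : n % 4 < 4 := Nat.mod_lt _ (by norm_num)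
  interval_cases n % 4 <;> rfl

theorem toCodeStep_spec (o : Code) (x : ℕ) :
    toCodeStep o ((List.range x).map fun i => toCode o (.ofNat i)) =
      some (toCode o (.ofNat x)) := by
  have hget : ∀ i < x, ((List.range x).map fun i => toCode o (.ofNat i))[i]? =
      some (toCode o (.ofNat i)) := fun i hi => by simp [hi]
  unfold toCodeStep
  simp only [List.length_map, List.length_range]
  rcases Nat.lt_or_ge x 5 with hx | hx
  · rw [if_pos hx]
    interval_cases x <;> simp [OCode.ofNat, toCode]
  obtain ⟨n, rfl⟩ : ∃ n, x = n + 5 := ⟨x - 5, by omega⟩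
  have hq : n / 4 < n + 5 := by omega
  have h1 : (n / 4).unpair.1 < n + 5 := (Nat.unpair_left_le _).trans_lt hq
  have h2 : (n / 4).unpair.2 < n + 5 := (Nat.unpair_right_le _).trans_lt hq
  rw [if_neg (by omega), Nat.add_sub_cancel, ofNat_add_five]
  have : n % 4 < 4 := Nat.mod_lt _ (by norm_num)
  interval_cases h : n % 4 <;> simp [hget _ hq, hget _ h1, hget _ h2, toCode, binaryCode]

open Primrec in
theorem toCodeStep_primrec : Primrec₂ toCodeStep := by
  have len : Primrec fun p : Code × List Code => p.2.length := list_length.comp snd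
  have r : Primrec fun p : Code × List Code => (p.2.length - 5) % 4 :=
    nat_mod.comp (nat_sub.comp len (const 5)) (const 4)
  have q : Primrec fun p : Code × List Code => (p.2.length - 5) / 4 :=
    nat_div.comp (nat_sub.comp len (const 5)) (const 4)
  have get : ∀ {f : Code × List Code → ℕ}, Primrec f → Primrec fun p => p.2[f p]? :=
    fun hf => list_getElem?.comp snd hf
  have bin : Primrec fun q : ℕ × Code × Code => binaryCode q.1 q.2.1 q.2.2 := by
    unfold binaryCode
    exact Primrec.ite (Primrec.eq.comp fst (const 0))
      (Code.primrec₂_pair.comp (fst.comp snd) (snd.comp snd))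
      (Primrec.ite (Primrec.eq.comp fst (const 1))
        (Code.primrec₂_prec.comp (fst.comp snd) (snd.comp snd))
        (Code.primrec₂_comp.comp (fst.comp snd) (snd.comp snd)))
  refine Primrec₂.mk <| Primrec.ite (nat_lt.comp len (const 5))
    (list_getElem?.comp (list_cons.comp (const _) <| list_cons.comp (const _) <|
      list_cons.comp (const _) <| list_cons.comp (const _) <| list_cons.comp fst (const []))
      len) ?_
  refine Primrec.ite (Primrec.eq.comp r (const 3))
    (option_map (get q) (Code.primrec_rfind'.comp snd).to₂) ?_
  exact option_bind (get (fst.comp (unpair.comp q))) <| Primrec₂.mk <|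
    option_map ((get (snd.comp (unpair.comp q))).comp fst)
      (bin.comp (Primrec.pair (r.comp (fst.comp fst)) (Primrec.pair (snd.comp fst) snd))).to₂

theorem toCode_ofNat_primrec : Primrec₂ fun (o : Code) (x : ℕ) => toCode o (.ofNat x) :=
  Primrec.nat_strong_rec _ toCodeStep_primrec toCodeStep_spec

def ofCode : Code → OCode
  | .zero => .zero
  | .succ => .succ
  | .left => .left
  | .right => .right
  | .pair cf cg => .pair (ofCode cf) (ofCode cg)
  | .comp cf cg => .comp (ofCode cf) (ofCode cg)
  | .prec cf cg => .prec (ofCode cf) (ofCode cg)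
  | .rfind' cf => .rfind' (ofCode cf)

theorem eval_ofCode (O : ℕ → Bool) (c : Code) : (ofCode c).eval O = c.eval := by
  rw [eval_eq_evalWith]
  induction c <;> simp only [ofCode, Code.eval, evalWith, *] <;> rfl

theorem exists_eval_eq_of_primrec {f : ℕ → ℕ} (hf : Primrec f) :
    ∃ c : OCode, ∀ O n, c.eval O n = Part.some (f n) := by
  obtain ⟨c, hc⟩ := Code.exists_code.1 (Partrec.nat_iff.1 hf.to_comp)
  exact ⟨ofCode c, fun O n => by rw [eval_ofCode, hc]; rfl⟩

section

variable (O : ℕ → Bool) (cf cg : OCode) (n : ℕ)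

theorem eval_oracle : oracle.eval O n = Part.some (cond (O n) 1 0) := rfl

theorem eval_pair : (pair cf cg).eval O n = Nat.pair <$> cf.eval O n <*> cg.eval O n := rfl

theorem eval_comp : (comp cf cg).eval O n = (cg.eval O n).bind fun x => cf.eval O x := rfl

theorem eval_prec_zero : (prec cf cg).eval O (Nat.pair n 0) = cf.eval O n := by
  simp [OCode.eval, Nat.unpaired]

theorem eval_prec_succ (m : ℕ) : (prec cf cg).eval O (Nat.pair n (m + 1)) =
    ((prec cf cg).eval O (Nat.pair n m)).bind fun i => cg.eval O (Nat.pair n (Nat.pair m i)) := by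
  simp [OCode.eval, Nat.unpaired]

end

theorem exists_eval_eq_encode_strPrefix :
    ∃ c : OCode, ∀ O n, c.eval O n = Part.some (encode (strPrefix O n)) := by
  obtain ⟨init, hinit⟩ := exists_eval_eq_of_primrec (f := fun n => Nat.pair 0 n)
    (Primrec₂.natPair.comp (Primrec.const 0) Primrec.id)
  obtain ⟨query, hquery⟩ := exists_eval_eq_of_primrec (f := fun z => z.unpair.2.unpair.1)
    (Primrec.fst.comp (Primrec.unpair.comp (Primrec.snd.comp Primrec.unpair)))
  obtain ⟨acc, hacc⟩ := exists_eval_eq_of_primrec (f := fun z => z.unpair.2.unpair.2)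
    (Primrec.snd.comp (Primrec.unpair.comp (Primrec.snd.comp Primrec.unpair)))
  obtain ⟨snoc, hsnoc⟩ := exists_eval_eq_of_primrec
    (f := fun z => encode ((decode (α := List Bool) z.unpair.2).getD [] ++ [z.unpair.1 == 1]))
    (Primrec.encode.comp <| Primrec.list_append.comp
      (Primrec.option_getD.comp (Primrec.decode.comp (Primrec.snd.comp Primrec.unpair))
        (Primrec.const []))
      (Primrec.list_cons.comp (Primrec.beq.comp (Primrec.fst.comp Primrec.unpair)
        (Primrec.const 1)) (Primrec.const [])))
  have hstep : ∀ O m, (prec zero (comp snoc (pair (comp oracle query) acc))).eval O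
      (Nat.pair 0 m) = Part.some (encode (strPrefix O m)) := by
    intro O m
    induction m with
    | zero => rw [eval_prec_zero]; rfl
    | succ m ih =>
      rw [eval_prec_succ, ih, Part.bind_some, eval_comp, eval_pair, eval_comp, hquery, hacc]
      simp only [Seq.seq, eval_oracle, hsnoc]
      have hbit : ((cond (O m) 1 0 : ℕ) == 1) = O m := by cases O m <;> rfl
      simp [hbit, strPrefix, List.range_succ]
  exact ⟨comp (prec zero (comp snoc (pair (comp oracle query) acc))) init, fun O n => by
    rw [eval_comp, hinit, Part.bind_some, hstep]⟩

open Classical in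
theorem treeComputableIn_of_primrecRel {R : List Bool → List Bool → Prop} (hR : PrimrecRel R)
    (A : ℕ → Bool) : TreeComputableIn A {σ | R σ (strPrefix A σ.length)} := by
  have hdec : Primrec fun n : ℕ => (decode (α := List Bool) n).getD [] :=
    Primrec.option_getD.comp Primrec.decode (Primrec.const [])
  obtain ⟨pre, hpre⟩ := exists_eval_eq_encode_strPrefix
  obtain ⟨len, hlen⟩ := exists_eval_eq_of_primrec (Primrec.list_length.comp hdec)
  obtain ⟨copy, hcopy⟩ := exists_eval_eq_of_primrec Primrec.id
  obtain ⟨test, htest⟩ := exists_eval_eq_of_primrec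
    (f := fun z => if R ((decode z.unpair.1).getD []) ((decode z.unpair.2).getD []) then 1 else 0)
    (Primrec.ite (hR.comp (hdec.comp (Primrec.fst.comp Primrec.unpair))
      (hdec.comp (Primrec.snd.comp Primrec.unpair))) (Primrec.const 1) (Primrec.const 0))
  refine ⟨comp test (pair copy (comp pre len)), fun σ => ?_⟩
  simp [eval_comp, eval_pair, hcopy, hlen, hpre, htest, Seq.seq]

theorem ofNat_four_mul_add_eight (i : ℕ) : OCode.ofNat (4 * i + 8) = .rfind' (.ofNat i) := by
  rw [show 4 * i + 8 = (4 * i + 3) + 5 by omega, ofNat_add_five]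
  simp [show (4 * i + 3) % 4 = 3 by omega, show (4 * i + 3) / 4 = i by omega]

theorem eval_rfind'_eq_none {O : ℕ → Bool} {cf : OCode} (hcf : ∀ x, (0 : ℕ) ∉ cf.eval O x)
    (n : ℕ) : (rfind' cf).eval O n = Part.none := by
  refine Part.eq_none_iff.2 fun a h => ?_
  simp only [OCode.eval, Nat.unpaired, Part.mem_map_iff] at h
  obtain ⟨y, hy, -⟩ := h
  obtain ⟨v, hv, hv0⟩ := Part.mem_map_iff _ |>.1 (Nat.rfind_spec hy)
  exact hcf _ (of_decide_eq_true hv0 ▸ hv)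

theorem exists_code_lookup : ∃ c : Code, ∀ (l : List Bool) (n : ℕ),
    c.eval (Nat.pair (encode l) n) = ((l[n]?.map fun b => cond b 1 0 : Option ℕ) : Part ℕ) := by
  let f : ℕ → Option ℕ := fun z =>
    ((decode (α := List Bool) z.unpair.1).bind (·[z.unpair.2]?)).map fun b => cond b 1 0
  have hf : Primrec f := Primrec.option_map
    (Primrec.option_bind (Primrec.decode.comp (Primrec.fst.comp Primrec.unpair))
      (Primrec.list_getElem?.comp Primrec.snd (Primrec.snd.comp (Primrec.unpair.comp
        Primrec.fst))).to₂)
    ((Primrec.dom_bool fun b => (cond b 1 0 : ℕ)).comp Primrec.snd).to₂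
  obtain ⟨c, hc⟩ := Code.exists_code.1 (Partrec.nat_iff.1 (Computable.ofOption hf.to_comp))
  exact ⟨c, fun l n => by simp [hc, f]⟩

noncomputable def lookupCode (l : List Bool) : Code :=
  exists_code_lookup.choose.curry (encode l)

theorem lookupCode_primrec : Primrec lookupCode :=
  Code.primrec₂_curry.comp (Primrec.const _) Primrec.encode

theorem mem_eval_lookupCode_strPrefix {A : ℕ → Bool} {m n a : ℕ} :
    a ∈ (lookupCode (strPrefix A m)).eval n ↔ n < m ∧ a = cond (A n) 1 0 := by
  rw [lookupCode, Code.eval_curry, exists_code_lookup.choose_spec]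
  by_cases hn : n < m <;> simp [strPrefix, hn]

theorem mem_eval_of_mem_eval_toCode_lookupCode {A : ℕ → Bool} {l : ℕ} {c : OCode} {n a : ℕ}
    (h : a ∈ (toCode (lookupCode (strPrefix A l)) c).eval n) : a ∈ c.eval A n := by
  rw [eval_toCode] at h
  rw [eval_eq_evalWith]
  refine evalWith_mono (fun n a ha => ?_) c h
  obtain ⟨-, rfl⟩ := mem_eval_lookupCode_strPrefix.1 ha
  exact Part.mem_some _

theorem eventually_mem_eval_toCode_lookupCode {A : ℕ → Bool} {c : OCode} {n a : ℕ}
    (h : a ∈ c.eval A n) : ∀ᶠ l in atTop, a ∈ (toCode (lookupCode (strPrefix A l)) c).eval n := by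
  rw [eval_eq_evalWith] at h
  simp only [eval_toCode]
  refine eventually_mem_evalWith (fun m b hb => ?_) c h
  filter_upwards [eventually_gt_atTop m] with l hl
  exact mem_eval_lookupCode_strPrefix.2 ⟨hl, Part.mem_some_iff.1 hb⟩

end OCode

/-- Since `OCode.ofNat (4 * i + 8) = rfind' (OCode.ofNat i)` and `OCode.ofNat 1 = succ`, this is
the index of `succ` under `k + 1` applications of `rfind'`; as `succ` never returns `0`, these
programs diverge everywhere. -/
def divergentIndex : ℕ → ℕ
  | 0 => 12
  | k + 1 => 4 * divergentIndex k + 8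

theorem eval_ofNat_divergentIndex (O : ℕ → Bool) (k n : ℕ) :
    (OCode.ofNat (divergentIndex k)).eval O n = Part.none := by
  induction k generalizing n with
  | zero =>
    refine (OCode.ofNat_four_mul_add_eight 1).symm ▸ OCode.eval_rfind'_eq_none (fun x h => ?_) n
    rw [show OCode.ofNat 1 = .succ by simp [OCode.ofNat]] at h
    exact absurd (Part.mem_some_iff.1 h) (by omega)
  | succ k ih =>
    refine (OCode.ofNat_four_mul_add_eight _).symm ▸ OCode.eval_rfind'_eq_none (fun x h => ?_) n
    exact Part.notMem_none _ (ih x ▸ h)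

theorem divergentIndex_strictMono : StrictMono divergentIndex :=
  strictMono_nat_of_lt_succ fun k => by simp only [divergentIndex]; omega

theorem divergentIndex_primrec : Primrec divergentIndex := by
  refine (Primrec.nat_rec₁ 12 (Primrec.nat_add.comp (Primrec.nat_mul.comp (Primrec.const 4)
    Primrec.snd) (Primrec.const 8)).to₂).of_eq fun k => ?_
  induction k with
  | zero => rfl
  | succ k ih => simp only [divergentIndex, ← ih]

open OCode

/-- Here `pre` stands for `A ↾ σ.length`. The fuel that `evaln` needs grows with the size of the
oracle prefix, so the prefix length `l` ranges independently of the fuel `s`. -/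
def PACodingRel (σ pre : List Bool) : Prop :=
  (∀ k < σ.length, divergentIndex k < σ.length →
    σ.getD (divergentIndex k) false = pre.getD k false) ∧
  ∀ x < σ.length, ∀ s < σ.length + 1, ∀ l < σ.length + 1,
    Code.evaln s (toCode (lookupCode (pre.take l)) (.ofNat x)) x ≠ some (cond (σ.getD x false) 1 0)

open Primrec in
theorem primrecRel_paCodingRel : PrimrecRel PACodingRel := by
  refine PrimrecPred.and ?_ ?_
  · refine PrimrecRel.forall_lt_of_primrec (p := fun (q : List Bool × List Bool) k =>
      divergentIndex k < q.1.length → q.1.getD (divergentIndex k) false = q.2.getD k false)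
      (PrimrecPred.imp ?_ ?_) (list_length.comp fst)
    · exact nat_lt.comp (divergentIndex_primrec.comp snd) (list_length.comp (fst.comp fst))
    · exact Primrec.eq.comp ((list_getD false).comp (fst.comp fst)
        (divergentIndex_primrec.comp snd)) ((list_getD false).comp (snd.comp fst) snd)
  refine PrimrecRel.forall_lt_of_primrec ?_ (list_length.comp fst)
  refine PrimrecRel.forall_lt_of_primrec ?_ (succ.comp (list_length.comp (fst.comp fst)))
  refine PrimrecRel.forall_lt_of_primrec ?_
    (succ.comp (list_length.comp (fst.comp (fst.comp fst))))
  have x := snd.comp (fst.comp (fst (α := ((List Bool × List Bool) × ℕ) × ℕ) (β := ℕ)))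
  have code := toCode_ofNat_primrec.comp (lookupCode_primrec.comp (list_take.comp snd
    (snd.comp (fst.comp (fst.comp fst))))) x
  refine PrimrecPred.not (Primrec.eq.comp
    (Code.primrec_evaln.comp (Primrec.pair (Primrec.pair (snd.comp fst) code) x)) ?_)
  exact option_some.comp ((Primrec.dom_bool fun b => (cond b 1 0 : ℕ)).comp
    ((list_getD false).comp (fst.comp (fst.comp (fst.comp fst))) x))

def paCodingTree (A : ℕ → Bool) : Set (List Bool) := {σ | PACodingRel σ (strPrefix A σ.length)}

theorem mem_paCodingTree {A : ℕ → Bool} {σ : List Bool} : σ ∈ paCodingTree A ↔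
    (∀ k, divergentIndex k < σ.length → σ.getD (divergentIndex k) false = A k) ∧
    ∀ x < σ.length, ∀ s ≤ σ.length, ∀ l ≤ σ.length,
      Code.evaln s (toCode (lookupCode (strPrefix A l)) (.ofNat x)) x ≠
        some (cond (σ.getD x false) 1 0) := by
  have hk : ∀ k, divergentIndex k < σ.length → k < σ.length := fun k hk =>
    (divergentIndex_strictMono.id_le k).trans_lt hk
  simp only [paCodingTree, PACodingRel, Set.mem_ofPred_eq, Nat.lt_succ_iff]
  refine and_congr ⟨fun h k hlt => ?_, fun h k _ hlt => ?_⟩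
    (forall₂_congr fun x _ => forall₂_congr fun s _ => forall₂_congr fun l hl => ?_)
  · rw [h k (hk k hlt) hlt, strPrefix_getD (hk k hlt)]
  · rw [h k hlt, strPrefix_getD (hk k hlt)]
  · rw [strPrefix_take hl]

theorem isStringTree_paCodingTree (A : ℕ → Bool) : IsStringTree (paCodingTree A) := by
  rintro _ τ hσ ⟨t, rfl⟩
  have hget : ∀ i < τ.length, (τ ++ t).getD i false = τ.getD i false :=
    fun i hi => List.getD_append _ _ _ _ hi
  have hlen : τ.length ≤ (τ ++ t).length := by simp
  obtain ⟨hcode, hdiag⟩ := mem_paCodingTree.1 hσ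
  refine mem_paCodingTree.2 ⟨fun k hk => ?_, fun x hx s hs l hl => ?_⟩
  · rw [← hget _ hk]
    exact hcode k (hk.trans_le hlen)
  · rw [← hget _ hx]
    exact hdiag x (hx.trans_le hlen) s (hs.trans hlen) l (hl.trans hlen)

open Classical in
noncomputable def paCodingPath (A : ℕ → Bool) (x : ℕ) : Bool :=
  if x ∈ Set.range divergentIndex then A (Function.invFun divergentIndex x)
  else !decide (1 ∈ (OCode.ofNat x).eval A x)

theorem paCodingPath_divergentIndex (A : ℕ → Bool) (k : ℕ) :
    paCodingPath A (divergentIndex k) = A k := by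
  rw [paCodingPath, if_pos (Set.mem_range_self k),
    Function.leftInverse_invFun divergentIndex_strictMono.injective k]

theorem paCodingPath_mem_PArel (A : ℕ → Bool) : paCodingPath A ∈ PArel A := by
  classical
  intro x hx
  by_cases hM : x ∈ Set.range divergentIndex
  · obtain ⟨k, rfl⟩ := hM
    rw [eval_ofNat_divergentIndex] at hx
    exact Part.notMem_none _ hx
  · rw [paCodingPath, if_neg hM] at hx
    by_cases h1 : 1 ∈ (OCode.ofNat x).eval A x
    · rw [decide_eq_true h1] at hx
      exact absurd (Part.mem_unique h1 hx) one_ne_zero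
    · rw [decide_eq_false h1] at hx
      exact h1 hx

theorem paCodingPath_mem_treePaths (A : ℕ → Bool) :
    paCodingPath A ∈ treePaths (paCodingTree A) := by
  intro n
  refine mem_paCodingTree.2 ⟨fun k hk => ?_, fun x hx s _ l _ hev => ?_⟩
  · rw [strPrefix_length] at hk
    rw [strPrefix_getD hk, paCodingPath_divergentIndex]
  · rw [strPrefix_length] at hx
    rw [strPrefix_getD hx] at hev
    exact paCodingPath_mem_PArel A x
      (mem_eval_of_mem_eval_toCode_lookupCode (Code.evaln_sound hev))

theorem mem_PArel_of_mem_treePaths {A f : ℕ → Bool} (hf : f ∈ treePaths (paCodingTree A)) :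
    f ∈ PArel A := by
  intro x hx
  obtain ⟨l, hl⟩ := (eventually_mem_eval_toCode_lookupCode hx).exists
  obtain ⟨s, hs⟩ := Code.evaln_complete.1 hl
  set n := max (x + 1) (max s l)
  have hn := (mem_paCodingTree.1 (hf n)).2 x (by simp [strPrefix_length, n]) s
    (by simp [strPrefix_length, n]) l (by simp [strPrefix_length, n])
  rw [strPrefix_getD (by omega)] at hn
  exact hn hs

theorem apply_divergentIndex_of_mem_treePaths {A f : ℕ → Bool}
    (hf : f ∈ treePaths (paCodingTree A)) (k : ℕ) : f (divergentIndex k) = A k := by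
  have h := (mem_paCodingTree.1 (hf (divergentIndex k + 1))).1 k (by simp [strPrefix_length])
  rwa [strPrefix_getD (Nat.lt_succ_self _)] at h

/-- For every real `A` there is a nonempty `Π⁰₁(A)` class `C ⊆ 2^ω` (the paths through a
tree computable in `A`) all of whose members `f` lie in `PA(A)` and satisfy `A ≤ₜₜ f`;
indeed there is a single infinite computable set `M` such that every `f ∈ C` codes `A`
on the positions in `M`, i.e. `Restr(f, M) = A`. -/
theorem exists_pi01_class_of_PA_coding (A : ℕ → Bool) :
    ∃ T : Set (List Bool), IsStringTree T ∧ TreeComputableIn A T ∧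
      (treePaths T).Nonempty ∧
      ∃ M : Set ℕ, M.Infinite ∧ ComputablePred (· ∈ M) ∧
        ∀ f ∈ treePaths T, f ∈ PArel A ∧ TTReducible A f ∧
          (fun i => f (Nat.nth (· ∈ M) i)) = A := by
  have hmono := divergentIndex_strictMono
  refine ⟨paCodingTree A, isStringTree_paCodingTree A,
    treeComputableIn_of_primrecRel primrecRel_paCodingRel A, ⟨_, paCodingPath_mem_treePaths A⟩,
    Set.range divergentIndex, Set.infinite_range_of_injective hmono.injective,
    (PrimrecPred.mem_range_of_strictMono divergentIndex_primrec hmono).computablePred,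
    fun f hf => ⟨mem_PArel_of_mem_treePaths hf, ?_, ?_⟩⟩
  · exact ttReducible_of_apply_eq divergentIndex_primrec (apply_divergentIndex_of_mem_treePaths hf)
  · rw [Nat.nth_mem_range_eq_of_strictMono hmono]
    exact funext (apply_divergentIndex_of_mem_treePaths hf)
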